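/- arXiv:1805.11666 — 6 statements merged into one kernel-verified Lean document; each statement's English description precedes it below -/
import Mathlib

section
/- Let X ∼ P on a finite set 𝒳 and let guesses be i.i.d. from a full-support distribution P̂, with G the first index k such that X̂ₖ = X. Then for ρ ≥ 1, the expectation of V_ρ = C(G + ρ - 1, ρ) equals ∑_{x ∈ 𝒳} P(x) / P̂(x)^ρ, where C denotes the generalized binomial coefficient. -/
open MeasureTheory ProbabilityTheory

/-- Generalized binomial coefficient via the Gamma function. -/
noncomputable def genBinom (x y : ℝ) : ℝ :=
  Real.Gamma (x + 1) / (Real.Gamma (y + 1) * Real.Gamma (x - y + 1))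

/-!
Split `Ω` according to the index `n` of the first correct guess, so that `G = n + 1` on the
`n`-th piece. By independence, the piece where moreover `X = x` has probability
`P(x) (1 - P̂(x))ⁿ P̂(x)`, so `E[V_ρ(G)] = ∑ₓ P(x) ∑ₙ C(ρ + n, ρ) (1 - P̂(x))ⁿ P̂(x)`.
For `0 < q ≤ 1` the inner series is the negative binomial series
`∑ₙ C(ρ + n, n) rⁿ = (1 - r)^(-(ρ + 1))` at `r = 1 - q`, multiplied by `q`, i.e. `q^(-ρ)`.
The pieces exhaust `Ω` up to a null set (off them `sInf ∅ = 0` gives the junk value `G = 1`)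
because their probabilities add up to `∑ₓ P(x) = 1`.
-/

open Set Finset Function

section NegativeBinomialSeries

theorem Real.ascPochhammer_eval_eq_Gamma_div {a : ℝ} (ha : 0 < a) (n : ℕ) :
    (ascPochhammer ℝ n).eval a = Real.Gamma (a + n) / Real.Gamma a := by
  induction n with
  | zero => simp [(Real.Gamma_pos_of_pos ha).ne']
  | succ n ih =>
    rw [ascPochhammer_succ_eval, ih, Nat.cast_succ, ← add_assoc,
      Real.Gamma_add_one (by positivity)]
    ring

theorem genBinom_add_natCast {ρ : ℝ} (hρ : -1 < ρ) (n : ℕ) :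
    genBinom (ρ + n) ρ = Ring.choose (ρ + n) n := by
  have hρ1 : 0 < ρ + 1 := by linarith
  have h := Ring.factorial_nsmul_multichoose_eq_ascPochhammer (ρ + 1) n
  rw [Ring.multichoose_eq, nsmul_eq_mul, Polynomial.ascPochhammer_smeval_eq_eval,
    Real.ascPochhammer_eval_eq_Gamma_div hρ1, show ρ + 1 + n - 1 = ρ + n by ring] at h
  rw [genBinom, show ρ + n - ρ + 1 = n + 1 by ring, Real.Gamma_nat_eq_factorial,
    show ρ + n + 1 = ρ + 1 + n by ring]
  have hΓ : Real.Gamma (ρ + 1) ≠ 0 := (Real.Gamma_pos_of_pos hρ1).ne'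
  have hfact : (n.factorial : ℝ) ≠ 0 := by positivity
  rw [← div_div, ← h]
  field_simp

theorem genBinom_add_natCast_pos {ρ : ℝ} (hρ : -1 < ρ) (n : ℕ) : 0 < genBinom (ρ + n) ρ := by
  unfold genBinom
  have hn : (0 : ℝ) ≤ n := n.cast_nonneg
  exact div_pos (Real.Gamma_pos_of_pos (by linarith))
    (mul_pos (Real.Gamma_pos_of_pos (by linarith)) (Real.Gamma_pos_of_pos (by linarith)))

theorem hasSum_genBinom_mul_pow {ρ x : ℝ} (hρ : -1 < ρ) (hx : |x| < 1) :
    HasSum (fun n : ℕ => genBinom (ρ + n) ρ * x ^ n) (1 / (1 - x) ^ (ρ + 1)) := by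
  have h := (Real.one_div_one_sub_rpow_hasFPowerSeriesOnBall_zero (ρ + 1)).hasSum
    (y := x) (by simpa [enorm_eq_nnnorm, ← NNReal.coe_lt_coe] using hx)
  simp only [FormalMultilinearSeries.ofScalars_apply_eq, zero_add, smul_eq_mul,
    show ∀ n : ℕ, ρ + 1 + n - 1 = ρ + n by intro; ring] at h
  simpa [genBinom_add_natCast hρ, mul_comm] using h

theorem hasSum_genBinom_mul_geometric {ρ q : ℝ} (hρ : -1 < ρ) (hq0 : 0 < q) (hq1 : q ≤ 1) :
    HasSum (fun n : ℕ => genBinom (ρ + n) ρ * ((1 - q) ^ n * q)) (q ^ ρ)⁻¹ := by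
  have h := (hasSum_genBinom_mul_pow hρ (x := 1 - q)
    (abs_lt.2 ⟨by linarith, by linarith⟩)).mul_right q
  rw [sub_sub_cancel, Real.rpow_add_one hq0.ne'] at h
  simpa only [mul_assoc, one_div, mul_inv, inv_mul_cancel_right₀ hq0.ne'] using h

theorem hasSum_one_sub_pow_mul {q : ℝ} (hq0 : 0 < q) (hq1 : q ≤ 1) :
    HasSum (fun n : ℕ => (1 - q) ^ n * q) 1 := by
  have h := (hasSum_geometric_of_lt_one (sub_nonneg.2 hq1) (by linarith)).mul_right q
  rwa [sub_sub_cancel, inv_mul_cancel₀ hq0.ne'] at h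

end NegativeBinomialSeries

section Partition

variable {Ω : Type*} [MeasurableSpace Ω] {μ : Measure Ω} {ι : Type*} [Countable ι]
  {A : ι → Set Ω}

theorem integral_eq_of_hasSum_of_eqOn_const [IsFiniteMeasure μ] (hA : ∀ i, MeasurableSet (A i))
    (hdisj : Pairwise (Disjoint on A)) (hcover : ∀ᵐ ω ∂μ, ω ∈ ⋃ i, A i) {f : Ω → ℝ}
    {c : ι → ℝ} (hc : ∀ i, 0 ≤ c i) (hf : ∀ i, EqOn f (fun _ => c i) (A i)) {s : ℝ}
    (hs : HasSum (fun i => c i * μ.real (A i)) s) :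
    ∫ ω, f ω ∂μ = s := by
  have hμ : μ.restrict (⋃ i, A i) = μ := Measure.restrict_eq_self_of_ae_mem hcover
  have hf_ae : ∀ i, f =ᵐ[μ.restrict (A i)] fun _ => c i := fun i =>
    (ae_restrict_mem (hA i)).mono (hf i)
  have hmeas : AEStronglyMeasurable f μ := by
    rw [← hμ, aestronglyMeasurable_iUnion_iff]
    exact fun i => aestronglyMeasurable_const.congr (hf_ae i).symm
  have hnonneg : 0 ≤ᵐ[μ] f := by
    rw [← hμ, Filter.EventuallyLE, ae_restrict_iUnion_iff]
    exact fun i => (hf_ae i).mono fun ω hω => hω ▸ hc i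
  have hterm : ∀ i, ∫⁻ ω in A i, ENNReal.ofReal (f ω) ∂μ =
      ENNReal.ofReal (c i * μ.real (A i)) := fun i => by
    rw [setLIntegral_congr_fun (hA i) fun ω hω => by rw [hf i hω], setLIntegral_const,
      ENNReal.ofReal_mul (hc i), ofReal_measureReal]
  rw [integral_eq_lintegral_of_nonneg_ae hnonneg hmeas, ← hμ, lintegral_iUnion hA hdisj,
    tsum_congr hterm, ← ENNReal.ofReal_tsum_of_nonneg
      (fun i => mul_nonneg (hc i) measureReal_nonneg) hs.summable, hs.tsum_eq,
    ENNReal.toReal_ofReal (hs.nonneg fun i => mul_nonneg (hc i) measureReal_nonneg)]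

theorem ae_mem_iUnion_of_hasSum_measureReal [IsProbabilityMeasure μ]
    (hA : ∀ i, MeasurableSet (A i)) (hdisj : Pairwise (Disjoint on A))
    (hs : HasSum (fun i => μ.real (A i)) 1) : ∀ᵐ ω ∂μ, ω ∈ ⋃ i, A i := by
  rw [ae_mem_iff_measure_eq (MeasurableSet.iUnion hA).nullMeasurableSet, measure_univ,
    measure_iUnion hdisj hA, tsum_congr fun i => (ofReal_measureReal (s := A i)).symm,
    ← ENNReal.ofReal_tsum_of_nonneg (fun _ => measureReal_nonneg) hs.summable, hs.tsum_eq,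
    ENNReal.ofReal_one]

end Partition

section FirstMatch

variable {Ω 𝒳 : Type*} {X : Ω → 𝒳} {Xhat : ℕ → Ω → 𝒳}

def firstMatchAt (X : Ω → 𝒳) (Xhat : ℕ → Ω → 𝒳) (n : ℕ) : Set Ω :=
  {ω | (∀ j < n, Xhat j ω ≠ X ω) ∧ Xhat n ω = X ω}

theorem sInf_eq_of_mem_firstMatchAt {n : ℕ} {ω : Ω} (h : ω ∈ firstMatchAt X Xhat n) :
    sInf {j | Xhat j ω = X ω} = n :=
  IsLeast.csInf_eq ⟨h.2, fun j hj => not_lt.1 fun hjn => h.1 j hjn hj⟩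

theorem pairwise_disjoint_firstMatchAt : Pairwise (Disjoint on firstMatchAt X Xhat) :=
  (pairwise_disjoint_on _).2 fun m _ hmn => disjoint_left.2 fun _ hm hn => hn.1 m hmn hm.2

variable [MeasurableSpace Ω] [MeasurableSpace 𝒳] [MeasurableSingletonClass 𝒳] {μ : Measure Ω}

theorem measurableSet_firstMatchAt [Countable 𝒳] (hX : Measurable X)
    (hXhat : ∀ j, Measurable (Xhat j)) (n : ℕ) : MeasurableSet (firstMatchAt X Xhat n) := by
  have hmatch : ∀ j, MeasurableSet {ω | Xhat j ω = X ω} := fun j =>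
    measurableSet_eq_fun (hXhat j) hX
  simp only [firstMatchAt, ofPred_and, ofPred_forall]
  exact .inter (.iInter fun j => .iInter fun _ => (hmatch j).compl) (hmatch n)

theorem measureReal_firstMatchAt_inter_preimage [IsProbabilityMeasure μ]
    (hindep : iIndepFun (fun o : Option ℕ => o.elim X Xhat) μ)
    (hXhat : ∀ j, Measurable (Xhat j)) (x : 𝒳) {q : ℝ}
    (hq : ∀ j, μ.real (Xhat j ⁻¹' {x}) = q) (n : ℕ) :
    μ.real (firstMatchAt X Xhat n ∩ X ⁻¹' {x}) = μ.real (X ⁻¹' {x}) * ((1 - q) ^ n * q) := by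
  let t : Option ℕ → Set 𝒳
    | none => {x}
    | some j => if j < n then {x}ᶜ else {x}
  have ht : ∀ o, MeasurableSet (t o) := by
    rintro (_ | j)
    · exact measurableSet_singleton x
    · dsimp only [t]
      split_ifs
      exacts [(measurableSet_singleton x).compl, measurableSet_singleton x]
  have hset : firstMatchAt X Xhat n ∩ X ⁻¹' {x} =
      ⋂ o ∈ insertNone (range (n + 1)), (o.elim X Xhat) ⁻¹' t o := by
    ext ω
    simp only [firstMatchAt, mem_inter_iff, mem_ofPred_eq, Set.mem_preimage, mem_singleton_iff,
      mem_iInter, Option.forall, Finset.mem_insertNone, Option.elim, Finset.mem_range, t, ne_eq,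
      Option.mem_def, reduceCtorEq, Order.lt_add_one_iff, IsEmpty.forall_iff, implies_true,
      forall_const, Option.some.injEq, forall_eq']
    constructor
    · rintro ⟨⟨hlt, hn⟩, rfl⟩
      refine ⟨rfl, fun j hj => ?_⟩
      rcases hj.lt_or_eq with hj | rfl
      · simpa [hj] using hlt j hj
      · simpa using hn
    · rintro ⟨rfl, h⟩
      exact ⟨⟨fun j hj => by simpa [hj] using h j hj.le, by simpa using h n le_rfl⟩, rfl⟩
  have hcompl : ∀ j, μ.real (Xhat j ⁻¹' {x}ᶜ) = 1 - q := fun j => by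
    rw [Set.preimage_compl, probReal_compl_eq_one_sub (hXhat j (measurableSet_singleton x)), hq]
  rw [hset, measureReal_def, hindep.measure_inter_preimage_eq_mul _ (fun o _ => ht o),
    ENNReal.toReal_prod, prod_insertNone, prod_range_succ]
  simp only [← measureReal_def, Option.elim, t, lt_irrefl, if_false, hq]
  rw [prod_congr rfl fun j hj => by rw [if_pos (Finset.mem_range.1 hj), hcompl], prod_const,
    card_range]

theorem measureReal_firstMatchAt [Fintype 𝒳] [IsProbabilityMeasure μ]
    (hindep : iIndepFun (fun o : Option ℕ => o.elim X Xhat) μ) (hX : Measurable X)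
    (hXhat : ∀ j, Measurable (Xhat j)) {q : 𝒳 → ℝ}
    (hq : ∀ j x, μ.real (Xhat j ⁻¹' {x}) = q x) (n : ℕ) :
    μ.real (firstMatchAt X Xhat n) = ∑ x, μ.real (X ⁻¹' {x}) * ((1 - q x) ^ n * q x) := by
  have hsplit : firstMatchAt X Xhat n = ⋃ x, firstMatchAt X Xhat n ∩ X ⁻¹' {x} := by
    rw [← inter_iUnion, ← preimage_iUnion, iUnion_of_singleton, preimage_univ, inter_univ]
  rw [hsplit, measureReal_iUnion_fintype]
  · exact sum_congr rfl fun x _ =>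
      measureReal_firstMatchAt_inter_preimage hindep hXhat x (hq · x) n
  · exact fun x y hxy => ((Set.disjoint_singleton.2 hxy).preimage X).mono inter_subset_right
      inter_subset_right
  · exact fun x => (measurableSet_firstMatchAt hX hXhat n).inter (hX (measurableSet_singleton x))

end FirstMatch

/-- Let `X ~ P` on a finite set `𝒳` and let guesses be i.i.d. from a full-support
distribution `Q = P̂`, independent of `X`, with `G` the first index `k ≥ 1` such that
`X̂ₖ = X`.  Then for `ρ ≥ 1`, `E[ C(G+ρ-1, ρ) ] = ∑_{x ∈ 𝒳} P(x) / P̂(x)^ρ`. -/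
theorem stmt_3 {𝒳 : Type*} [Fintype 𝒳] [m𝒳 : MeasurableSpace 𝒳] [MeasurableSingletonClass 𝒳]
    {Ω : Type*} [MeasurableSpace Ω] (μ : Measure Ω) [IsProbabilityMeasure μ]
    (P Q : 𝒳 → ℝ) (hP0 : ∀ x, 0 ≤ P x) (hP1 : ∑ x, P x = 1)
    (hQ0 : ∀ x, 0 < Q x) (hQ1 : ∑ x, Q x = 1)
    (X : Ω → 𝒳) (Xhat : ℕ → Ω → 𝒳)
    (hXm : Measurable X) (hXhatm : ∀ j, Measurable (Xhat j))
    (hindep : iIndepFun (fun (o : Option ℕ) => o.elim X Xhat) μ)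
    (hlawX : ∀ x, μ {ω | X ω = x} = ENNReal.ofReal (P x))
    (hlawXhat : ∀ j x, μ {ω | Xhat j ω = x} = ENNReal.ofReal (Q x))
    (G : Ω → ℕ) (hG : ∀ ω, G ω = sInf {j | Xhat j ω = X ω} + 1)
    (ρ : ℝ) (hρ : 1 ≤ ρ) :
    ∫ ω, genBinom ((G ω : ℝ) + ρ - 1) ρ ∂μ = ∑ x, P x / Q x ^ ρ := by
  have hρ' : -1 < ρ := by linarith
  have hQle : ∀ x, Q x ≤ 1 := fun x => hQ1 ▸ single_le_sum (fun y _ => (hQ0 y).le) (mem_univ x)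
  have hlawX' : ∀ x, μ.real (X ⁻¹' {x}) = P x := fun x => by
    rw [measureReal_def, ← ENNReal.toReal_ofReal (hP0 x), ← hlawX]; rfl
  have hlawXhat' : ∀ j x, μ.real (Xhat j ⁻¹' {x}) = Q x := fun j x => by
    rw [measureReal_def, ← ENNReal.toReal_ofReal (hQ0 x).le, ← hlawXhat]; rfl
  have hfirst : ∀ n, μ.real (firstMatchAt X Xhat n) = ∑ x, P x * ((1 - Q x) ^ n * Q x) :=
    fun n => by simp only [measureReal_firstMatchAt hindep hXm hXhatm hlawXhat' n, hlawX']
  have hA := measurableSet_firstMatchAt hXm hXhatm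
  refine integral_eq_of_hasSum_of_eqOn_const hA pairwise_disjoint_firstMatchAt ?_
    (fun n => (genBinom_add_natCast_pos hρ' n).le) (fun n ω hω => ?_) ?_
  · refine ae_mem_iUnion_of_hasSum_measureReal hA pairwise_disjoint_firstMatchAt ?_
    simp_rw [hfirst]
    simpa only [mul_one, hP1] using hasSum_sum fun x (_ : x ∈ Finset.univ) =>
      (hasSum_one_sub_pow_mul (hQ0 x) (hQle x)).mul_left (P x)
  · simp only [hG, sInf_eq_of_mem_firstMatchAt hω, Nat.cast_succ]
    ring_nf
  · simp_rw [hfirst, mul_sum]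
    refine hasSum_sum fun x _ => ?_
    simpa [div_eq_mul_inv, mul_left_comm] using
      (hasSum_genBinom_mul_geometric hρ' (hQ0 x) (hQle x)).mul_left (P x)
end

section
/- For a distribution P on a finite set 𝒳 and ρ > 0, the minimum over all probability distributions Q on 𝒳 of ∑_{x ∈ 𝒳} P(x)/Q(x)^ρ is achieved by the tilted distribution Q*(x) = P(x)^{1/(1+ρ)} / ∑_{x'} P(x')^{1/(1+ρ)}, and the minimum value equals (∑_{x ∈ 𝒳} P(x)^{1/(1+ρ)})^{1+ρ}. -/
/-!
Writing `a = 1/(1+ρ)`, weighted Hölder with weights `Q` and exponent `1 + ρ` applied to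
`P^a / Q` gives `∑ P^a ≤ (∑ Q)^(1-a) (∑ P / Q^ρ)^a`, so `∑ P / Q^ρ ≥ (∑ P^a)^(1+ρ)` whenever
`∑ Q = 1`. For the tilted distribution `Q* ∝ P^a` each term `P / Q*^ρ` equals `P^a (∑ P^a)^ρ`,
so the bound is attained.
-/

open Finset Real

noncomputable def tilted {𝒳 : Type*} [Fintype 𝒳] (P : 𝒳 → ℝ) (ρ : ℝ) (x : 𝒳) : ℝ :=
  P x ^ (1 / (1 + ρ)) / ∑ x', P x' ^ (1 / (1 + ρ))

section

variable {𝒳 : Type*} [Fintype 𝒳] {P Q : 𝒳 → ℝ} {ρ : ℝ}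

lemma sum_rpow_pos [Nonempty 𝒳] (hP : ∀ x, 0 < P x) (a : ℝ) : 0 < ∑ x, P x ^ a :=
  sum_pos (fun x _ ↦ rpow_pos_of_pos (hP x) a) univ_nonempty

lemma tilted_pos [Nonempty 𝒳] (hP : ∀ x, 0 < P x) (x : 𝒳) : 0 < tilted P ρ x :=
  div_pos (rpow_pos_of_pos (hP x) _) (sum_rpow_pos hP _)

lemma sum_tilted [Nonempty 𝒳] (hP : ∀ x, 0 < P x) : ∑ x, tilted P ρ x = 1 := by
  simp only [tilted, ← sum_div]
  exact div_self (sum_rpow_pos hP _).ne'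

lemma div_tilted_rpow [Nonempty 𝒳] (hP : ∀ x, 0 < P x) (hρ : 1 + ρ ≠ 0) (x : 𝒳) :
    P x / tilted P ρ x ^ ρ = P x ^ (1 / (1 + ρ)) * (∑ x', P x' ^ (1 / (1 + ρ))) ^ ρ := by
  have hS := sum_rpow_pos hP (1 / (1 + ρ))
  have hPρ : 0 < P x ^ (1 / (1 + ρ) * ρ) := rpow_pos_of_pos (hP x) _
  have ha : 1 / (1 + ρ) + 1 / (1 + ρ) * ρ = 1 := by field_simp
  rw [tilted, div_rpow (rpow_pos_of_pos (hP x) _).le hS.le, ← rpow_mul (hP x).le,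
    div_div_eq_mul_div, div_eq_iff hPρ.ne', mul_right_comm, ← rpow_add (hP x), ha, rpow_one]

lemma sum_div_tilted_rpow [Nonempty 𝒳] (hP : ∀ x, 0 < P x) (hρ : 1 + ρ ≠ 0) :
    ∑ x, P x / tilted P ρ x ^ ρ = (∑ x, P x ^ (1 / (1 + ρ))) ^ (1 + ρ) := by
  rw [sum_congr rfl fun x _ ↦ div_tilted_rpow hP hρ x, ← sum_mul,
    rpow_add (sum_rpow_pos hP _), rpow_one]

lemma rpow_sum_rpow_le_sum_div_rpow (hP : ∀ x, 0 ≤ P x) (hQ : ∀ x, 0 < Q x)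
    (hQ1 : ∑ x, Q x = 1) (hρ : 0 ≤ ρ) :
    (∑ x, P x ^ (1 / (1 + ρ))) ^ (1 + ρ) ≤ ∑ x, P x / Q x ^ ρ := by
  have hρ1 : 0 < 1 + ρ := by linarith
  rw [one_div]
  have hoelder := inner_le_weight_mul_Lp_of_nonneg univ (le_add_of_nonneg_right hρ) Q
    (fun x ↦ P x ^ (1 + ρ)⁻¹ / Q x) (fun x ↦ (hQ x).le)
    (fun x ↦ div_nonneg (rpow_nonneg (hP x) _) (hQ x).le)
  have hlhs (x : 𝒳) : Q x * (P x ^ (1 + ρ)⁻¹ / Q x) = P x ^ (1 + ρ)⁻¹ :=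
    mul_div_cancel₀ _ (hQ x).ne'
  have hrhs (x : 𝒳) : Q x * (P x ^ (1 + ρ)⁻¹ / Q x) ^ (1 + ρ) = P x / Q x ^ ρ := by
    rw [div_rpow (rpow_nonneg (hP x) _) (hQ x).le, rpow_inv_rpow (hP x) hρ1.ne',
      rpow_add (hQ x), rpow_one]
    field_simp [(hQ x).ne']
  simp only [hlhs, hrhs, hQ1, one_rpow, one_mul] at hoelder
  have hsum : 0 ≤ ∑ x, P x / Q x ^ ρ :=
    sum_nonneg fun x _ ↦ div_nonneg (hP x) (rpow_nonneg (hQ x).le ρ)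
  calc (∑ x, P x ^ (1 + ρ)⁻¹) ^ (1 + ρ)
      ≤ ((∑ x, P x / Q x ^ ρ) ^ (1 + ρ)⁻¹) ^ (1 + ρ) :=
        rpow_le_rpow (sum_nonneg fun x _ ↦ rpow_nonneg (hP x) _) hoelder hρ1.le
    _ = ∑ x, P x / Q x ^ ρ := rpow_inv_rpow hsum hρ1.ne'

end

/-- For a full-support distribution `P` on a finite set `𝒳` and `ρ > 0`, the minimum over
probability distributions `Q` on `𝒳` of `∑_x P(x)/Q(x)^ρ` is achieved by the tilted
distribution `Q*(x) = P(x)^{1/(1+ρ)} / ∑_{x'} P(x')^{1/(1+ρ)}`, with minimum value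
`(∑_x P(x)^{1/(1+ρ)})^{1+ρ}`. -/
theorem stmt_4 {𝒳 : Type*} [Fintype 𝒳]
    (P : 𝒳 → ℝ) (hP0 : ∀ x, 0 < P x) (hP1 : ∑ x, P x = 1)
    (ρ : ℝ) (hρ : 0 < ρ)
    (Qstar : 𝒳 → ℝ)
    (hQstar : ∀ x, Qstar x = P x ^ (1 / (1 + ρ)) / ∑ x', P x' ^ (1 / (1 + ρ))) :
    (∀ x, 0 < Qstar x) ∧ (∑ x, Qstar x = 1) ∧
    (∀ Q : 𝒳 → ℝ, (∀ x, 0 < Q x) → (∑ x, Q x = 1) →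
        ∑ x, P x / Qstar x ^ ρ ≤ ∑ x, P x / Q x ^ ρ) ∧
    ∑ x, P x / Qstar x ^ ρ = (∑ x, P x ^ (1 / (1 + ρ))) ^ (1 + ρ) := by
  obtain rfl : Qstar = tilted P ρ := funext hQstar
  have : Nonempty 𝒳 := by
    by_contra h
    simp [not_nonempty_iff.mp h] at hP1
  have hρ1 : 1 + ρ ≠ 0 := by linarith
  refine ⟨tilted_pos hP0, sum_tilted hP0, fun Q hQ0 hQ1 ↦ ?_, sum_div_tilted_rpow hP0 hρ1⟩
  rw [sum_div_tilted_rpow hP0 hρ1]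
  exact rpow_sum_rpow_le_sum_div_rpow (fun x ↦ (hP0 x).le) hQ0 hQ1 hρ.le
end

section
/- For any guessing function G on a finite set 𝒳 (an injection from 𝒳 into the positive integers) and any ρ ≥ 0, E[G(X)^ρ] ≥ (1 + log|𝒳|)^{-ρ} (∑_{x ∈ 𝒳} P(x)^{1/(1+ρ)})^{1+ρ}. -/
/-!
Write `P x ^ (1 / (1 + ρ))` as `w * f` with weights `w = 1 / G` and `f = P ^ (1 / (1 + ρ)) * G`.
Weighted Hölder with exponent `1 + ρ` bounds `(∑ P ^ (1 / (1 + ρ))) ^ (1 + ρ)` by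
`(∑ 1 / G) ^ ρ * E[G ^ ρ]`, and since `G` is injective into the positive integers, `∑ 1 / G` is at
most the harmonic number `H_|𝒳| ≤ 1 + log |𝒳|`.
-/

open Finset Real

theorem Finset.sum_inv_le_harmonic_card {S : Finset ℕ} (hS : 0 ∉ S) :
    ∑ k ∈ S, (k : ℝ)⁻¹ ≤ harmonic #S := by
  induction S using Finset.induction_on_max with
  | empty => simp
  | insert a s ha ih =>
    have has : a ∉ s := fun h => lt_irrefl a (ha a h)
    have hs : 0 ∉ s := fun h => hS (mem_insert_of_mem h)
    have hcard : #s + 1 ≤ a := by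
      have hsub : s ⊆ Ico 1 a := fun x hx =>
        mem_Ico.mpr ⟨Nat.one_le_iff_ne_zero.mpr fun h => hs (h ▸ hx), ha x hx⟩
      have := card_le_card hsub
      have ha0 : a ≠ 0 := fun h => hS (h ▸ mem_insert_self a s)
      rw [Nat.card_Ico] at this
      omega
    have ha_inv : (a : ℝ)⁻¹ ≤ ((#s + 1 : ℕ) : ℝ)⁻¹ := by gcongr
    rw [sum_insert has, card_insert_of_notMem has, harmonic_succ]
    push_cast at ha_inv ⊢
    linarith [ih hs]

theorem sum_inv_natCast_le_one_add_log {ι : Type*} [Fintype ι] {G : ι → ℕ}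
    (hG : Function.Injective G) (hG_pos : ∀ i, 1 ≤ G i) :
    ∑ i, (G i : ℝ)⁻¹ ≤ 1 + log (Fintype.card ι) := by
  have h0 : 0 ∉ univ.image G := by
    simp only [mem_image, mem_univ, true_and, not_exists]
    exact fun i h => by simpa [h] using hG_pos i
  calc ∑ i, (G i : ℝ)⁻¹ = ∑ k ∈ univ.image G, (k : ℝ)⁻¹ := by rw [sum_image fun _ _ _ _ h => hG h]
    _ ≤ harmonic #(univ.image G) := sum_inv_le_harmonic_card h0
    _ = harmonic (Fintype.card ι) := by rw [card_image_of_injective _ hG, card_univ]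
    _ ≤ 1 + log (Fintype.card ι) := harmonic_le_one_add_log _

theorem rpow_sum_rpow_one_div_one_add_le {ι : Type*} (s : Finset ι) {P w : ι → ℝ}
    (hP : ∀ i, 0 ≤ P i) (hw : ∀ i, 0 < w i) {ρ : ℝ} (hρ : 0 ≤ ρ) :
    (∑ i ∈ s, P i ^ (1 / (1 + ρ))) ^ (1 + ρ) ≤ (∑ i ∈ s, (w i)⁻¹) ^ ρ * ∑ i ∈ s, P i * w i ^ ρ := by
  have hp : 0 < 1 + ρ := by linarith
  have hf : ∀ i, (w i)⁻¹ * (P i ^ (1 / (1 + ρ)) * w i) = P i ^ (1 / (1 + ρ)) := fun i => by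
    field_simp [(hw i).ne']
  have hfp : ∀ i, (w i)⁻¹ * (P i ^ (1 / (1 + ρ)) * w i) ^ (1 + ρ) = P i * w i ^ ρ := fun i => by
    rw [mul_rpow (rpow_nonneg (hP i) _) (hw i).le, ← rpow_mul (hP i), one_div_mul_cancel hp.ne',
      rpow_one, rpow_add (hw i), rpow_one]
    field_simp [(hw i).ne']
  have holder := inner_le_weight_mul_Lp_of_nonneg s (by linarith : 1 ≤ 1 + ρ) (fun i => (w i)⁻¹)
    (fun i => P i ^ (1 / (1 + ρ)) * w i) (fun i => (inv_pos.mpr (hw i)).le)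
    (fun i => mul_nonneg (rpow_nonneg (hP i) _) (hw i).le)
  simp only [hf, hfp] at holder
  have hH : 0 ≤ ∑ i ∈ s, (w i)⁻¹ := sum_nonneg fun i _ => (inv_pos.mpr (hw i)).le
  have hB : 0 ≤ ∑ i ∈ s, P i * w i ^ ρ :=
    sum_nonneg fun i _ => mul_nonneg (hP i) (rpow_nonneg (hw i).le _)
  calc (∑ i ∈ s, P i ^ (1 / (1 + ρ))) ^ (1 + ρ)
      ≤ ((∑ i ∈ s, (w i)⁻¹) ^ (1 - (1 + ρ)⁻¹) * (∑ i ∈ s, P i * w i ^ ρ) ^ (1 + ρ)⁻¹)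
          ^ (1 + ρ) := by
        gcongr
        exact sum_nonneg fun i _ => rpow_nonneg (hP i) _
    _ = (∑ i ∈ s, (w i)⁻¹) ^ ρ * ∑ i ∈ s, P i * w i ^ ρ := by
        rw [mul_rpow (rpow_nonneg hH _) (rpow_nonneg hB _), ← rpow_mul hH, ← rpow_mul hB,
          inv_mul_cancel₀ hp.ne', rpow_one, sub_mul, one_mul, inv_mul_cancel₀ hp.ne',
          add_sub_cancel_left]

theorem stmt_9_general {𝒳 : Type*} [Fintype 𝒳]
    (P : 𝒳 → ℝ) (hP0 : ∀ x, 0 ≤ P x)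
    (G : 𝒳 → ℕ) (hGinj : Function.Injective G) (hGpos : ∀ x, 1 ≤ G x)
    (ρ : ℝ) (hρ : 0 ≤ ρ) :
    (1 + Real.log (Fintype.card 𝒳)) ^ (-ρ) * (∑ x, P x ^ (1 / (1 + ρ))) ^ (1 + ρ)
      ≤ ∑ x, P x * (G x : ℝ) ^ ρ := by
  have hG : ∀ x, (0 : ℝ) < G x := fun x => by exact_mod_cast hGpos x
  have hlog : 0 < 1 + log (Fintype.card 𝒳) := by linarith [log_natCast_nonneg (Fintype.card 𝒳)]
  rw [rpow_neg hlog.le, inv_mul_le_iff₀ (rpow_pos_of_pos hlog ρ)]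
  calc (∑ x, P x ^ (1 / (1 + ρ))) ^ (1 + ρ)
      ≤ (∑ x, (G x : ℝ)⁻¹) ^ ρ * ∑ x, P x * (G x : ℝ) ^ ρ :=
        rpow_sum_rpow_one_div_one_add_le univ hP0 hG hρ
    _ ≤ (1 + log (Fintype.card 𝒳)) ^ ρ * ∑ x, P x * (G x : ℝ) ^ ρ := by
        have hB := sum_nonneg fun x (_ : x ∈ univ) => mul_nonneg (hP0 x) (rpow_nonneg (hG x).le ρ)
        gcongr
        exact sum_inv_natCast_le_one_add_log hGinj hGpos

/-- Arikan's lower bound: for any guessing function `G` on a finite set `𝒳` (an injection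
into the positive integers) and any `ρ ≥ 0`, with `X ~ P`,
`E[G(X)^ρ] ≥ (1 + log|𝒳|)^{-ρ} (∑_x P(x)^{1/(1+ρ)})^{1+ρ}`. -/
theorem stmt_9 {𝒳 : Type*} [Fintype 𝒳]
    (P : 𝒳 → ℝ) (hP0 : ∀ x, 0 ≤ P x) (hP1 : ∑ x, P x = 1)
    (G : 𝒳 → ℕ) (hGinj : Function.Injective G) (hGpos : ∀ x, 1 ≤ G x)
    (ρ : ℝ) (hρ : 0 ≤ ρ) :
    (1 + Real.log (Fintype.card 𝒳)) ^ (-ρ) * (∑ x, P x ^ (1 / (1 + ρ))) ^ (1 + ρ)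
      ≤ ∑ x, P x * (G x : ℝ) ^ ρ :=
  stmt_9_general P hP0 G hGinj hGpos ρ hρ
end

section
/- Let G* be the guessing function that orders elements of a finite set 𝒳 by decreasing probability under P (ties broken arbitrarily). Then for any ρ ≥ 0, E[G*(X)^ρ] ≤ (∑_{x ∈ 𝒳} P(x)^{1/(1+ρ)})^{1+ρ}. -/
/-- Arikan's upper bound for the optimal guessing function: if `G*` orders the elements of
a finite set `𝒳` by decreasing probability under `P` (so `G*` is a bijection onto
`{1, …, |𝒳|}`, encoded here via an equivalence with `Fin |𝒳|` and position `G* x + 1`),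
then for any `ρ ≥ 0`, `E[G*(X)^ρ] ≤ (∑_x P(x)^{1/(1+ρ)})^{1+ρ}`. -/
theorem stmt_10 {𝒳 : Type*} [Fintype 𝒳]
    (P : 𝒳 → ℝ) (hP0 : ∀ x, 0 ≤ P x) (hP1 : ∑ x, P x = 1)
    (Gstar : 𝒳 ≃ Fin (Fintype.card 𝒳))
    (hdec : ∀ x x' : 𝒳, (Gstar x : ℕ) < (Gstar x' : ℕ) → P x' ≤ P x)
    (ρ : ℝ) (hρ : 0 ≤ ρ) :
    ∑ x, P x * ((Gstar x : ℕ) + 1 : ℝ) ^ ρ ≤ (∑ x, P x ^ (1 / (1 + ρ))) ^ (1 + ρ) := by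

  have h1ρ : (0:ℝ) < 1 + ρ := by linarith
  set α : ℝ := 1 / (1 + ρ) with hα
  have hα0 : 0 < α := by positivity
  have hαρ : α * (1 + ρ) = 1 := one_div_mul_cancel h1ρ.ne'
  set S : ℝ := ∑ x, P x ^ α with hS
  have hterm0 : ∀ x : 𝒳, 0 ≤ P x ^ α := fun x => Real.rpow_nonneg (hP0 x) α
  have hSpos : 0 < S := by
    obtain ⟨x, hx⟩ : ∃ x : 𝒳, 0 < P x := by
      by_contra h
      push_neg at h
      have : ∑ x, P x ≤ 0 := Finset.sum_nonpos fun x _ => h x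
      linarith [hP1 ▸ this]
    have : 0 < P x ^ α := Real.rpow_pos_of_pos hx α
    calc 0 < P x ^ α := this
      _ ≤ S := Finset.single_le_sum (fun y _ => hterm0 y) (Finset.mem_univ x)
  -- key count: (Gstar x + 1) ≤ S / P x ^ α for P x > 0
  have key : ∀ x : 𝒳, ((Gstar x : ℕ) + 1 : ℝ) * P x ^ α ≤ S := by
    intro x
    have hcard : (Finset.univ.filter fun x' : 𝒳 => Gstar x' ≤ Gstar x).card
        = (Gstar x : ℕ) + 1 := by
      rw [← Fin.card_Iic (Gstar x)]
      apply Finset.card_bij (fun a _ => Gstar a)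
      · intro a ha; simp [Finset.mem_Iic]; exact (Finset.mem_filter.mp ha).2
      · intro a _ b _ h; exact Gstar.injective h
      · intro i hi
        exact ⟨Gstar.symm i, by simp [Finset.mem_Iic.mp hi], by simp⟩
    calc ((Gstar x : ℕ) + 1 : ℝ) * P x ^ α
        = (Finset.univ.filter fun x' : 𝒳 => Gstar x' ≤ Gstar x).card • (P x ^ α) := by
          rw [hcard]; push_cast [nsmul_eq_mul]; ring
      _ ≤ ∑ x' ∈ Finset.univ.filter fun x' : 𝒳 => Gstar x' ≤ Gstar x, P x' ^ α := by
          apply Finset.card_nsmul_le_sum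
          intro x' hx'
          have h' : Gstar x' ≤ Gstar x := (Finset.mem_filter.mp hx').2
          have hPle : P x ≤ P x' := by
            rcases lt_or_eq_of_le h' with h | h
            · exact hdec x' x (Fin.lt_def.mp h)
            · rw [Gstar.injective h]
          exact Real.rpow_le_rpow (hP0 x) hPle hα0.le
      _ ≤ S := Finset.sum_le_sum_of_subset_of_nonneg (Finset.filter_subset _ _)
          (fun y _ _ => hterm0 y)
  have main : ∀ x : 𝒳, P x * ((Gstar x : ℕ) + 1 : ℝ) ^ ρ ≤ P x ^ α * S ^ ρ := by
    intro x
    rcases eq_or_lt_of_le (hP0 x) with h0 | h0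
    · rw [← h0]
      rw [Real.zero_rpow hα0.ne']
      simp
    · have hPα : 0 < P x ^ α := Real.rpow_pos_of_pos h0 α
      have h1 : ((Gstar x : ℕ) + 1 : ℝ) ≤ S / P x ^ α := by
        rw [le_div_iff₀ hPα]; exact key x
      have h2 : ((Gstar x : ℕ) + 1 : ℝ) ^ ρ ≤ (S / P x ^ α) ^ ρ :=
        Real.rpow_le_rpow (by positivity) h1 hρ
      have h3 : P x * ((Gstar x : ℕ) + 1 : ℝ) ^ ρ ≤ P x * (S / P x ^ α) ^ ρ :=
        mul_le_mul_of_nonneg_left h2 (hP0 x)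
      refine h3.trans_eq ?_
      have hexp : (1:ℝ) + -(α * ρ) = α := by
        have h' : α + α * ρ = 1 := by linear_combination hαρ
        linarith
      rw [Real.div_rpow hSpos.le hPα.le, ← Real.rpow_mul (hP0 x)]
      calc P x * (S ^ ρ / P x ^ (α * ρ))
          = P x ^ (1:ℝ) * P x ^ (-(α * ρ)) * S ^ ρ := by
            rw [Real.rpow_one, Real.rpow_neg (hP0 x)]; ring
        _ = P x ^ ((1:ℝ) + -(α * ρ)) * S ^ ρ := by rw [← Real.rpow_add h0]
        _ = P x ^ α * S ^ ρ := by rw [hexp]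
  calc ∑ x, P x * ((Gstar x : ℕ) + 1 : ℝ) ^ ρ
      ≤ ∑ x, P x ^ α * S ^ ρ := Finset.sum_le_sum fun x _ => main x
    _ = S * S ^ ρ := by rw [← Finset.sum_mul]
    _ = S ^ (1 + ρ) := by rw [Real.rpow_add hSpos, Real.rpow_one]
end

section
/- Let X₁, X₂, … be i.i.d. from a distribution P on a finite set 𝒳, let 𝐗ₙ = (X₁,…,Xₙ), and let G*ₙ be the optimal (probability-decreasing) guessing function on 𝒳ⁿ for the product distribution. Then for any ρ > 0, lim_{n→∞} (1/n) log E[G*ₙ(𝐗ₙ)^ρ] = ρ · H_{1/(1+ρ)}(X₁), where H_α is the Rényi entropy of order α. -/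
/-!
Arikan's two bounds sandwich the guessing moment `E[G(X)^ρ]` of an optimal guesser between
`(1 + ln M)^{-ρ} (∑ Q^α)^{1+ρ}` and `(∑ Q^α)^{1+ρ}`, where `α = 1/(1+ρ)` and `M` is the size of
the alphabet. The upper bound holds because the `G(a)+1` most likely values all have probability
at least `Q a`, so `(G(a)+1) Q(a)^α ≤ ∑ Q^α`; the lower bound is Hölder's inequality against the
weights `1/(G+1)`, whose sum is a harmonic number. For the product distribution on `𝒳ⁿ` we have
`∑ Q^α = (∑ P^α)^n` and `ln M = n ln |𝒳|`, so after taking `(1/n) log` the factor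
`(1 + n ln |𝒳|)^{-ρ}` disappears in the limit, leaving `(1+ρ) log ∑ P^α = ρ H_{1/(1+ρ)}(P)`.
-/

/-- Rényi entropy of order `α ≠ 1` (natural logarithm) of a distribution on a finite set. -/
noncomputable def renyiEntropy {𝒳 : Type*} [Fintype 𝒳] (α : ℝ) (P : 𝒳 → ℝ) : ℝ :=
  (1 / (1 - α)) * Real.log (∑ x, P x ^ α)

open Finset Filter Topology Real

namespace Guessing

variable {X : Type*} [Fintype X]

/-- `G a` is `0`-indexed, so `G a + 1` is the number of guesses needed to find `a`. -/
noncomputable def moment (Q : X → ℝ) (G : X ≃ Fin (Fintype.card X)) (ρ : ℝ) : ℝ :=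
  ∑ a, Q a * ((G a : ℕ) + 1 : ℝ) ^ ρ

lemma rank_succ_mul_le_sum (G : X ≃ Fin (Fintype.card X)) (w : X → ℝ) (hw : ∀ x, 0 ≤ w x)
    (hanti : ∀ a b, (G a : ℕ) < (G b : ℕ) → w b ≤ w a) (a : X) :
    ((G a : ℕ) + 1 : ℝ) * w a ≤ ∑ b, w b := by
  have hle : ∀ k ∈ Iic (G a), w a ≤ w (G.symm k) := by
    intro k hk
    rcases (Fin.le_iff_val_le_val.mp (mem_Iic.mp hk)).lt_or_eq with hlt | heq
    · exact hanti _ _ (by simpa using hlt)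
    · rw [← G.symm_apply_apply a, Fin.ext heq]
  calc ((G a : ℕ) + 1 : ℝ) * w a = ∑ _k ∈ Iic (G a), w a := by
        rw [sum_const, Fin.card_Iic, nsmul_eq_mul]; push_cast; ring
    _ ≤ ∑ k ∈ Iic (G a), w (G.symm k) := sum_le_sum hle
    _ ≤ ∑ k, w (G.symm k) :=
        sum_le_sum_of_subset_of_nonneg (subset_univ _) fun k _ _ => hw _
    _ = ∑ b, w b := G.symm.sum_comp w

lemma moment_le_sum_rpow_pow (Q : X → ℝ) (hQ : ∀ x, 0 ≤ Q x) {ρ : ℝ} (hρ : 0 ≤ ρ)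
    (G : X ≃ Fin (Fintype.card X)) (hdec : ∀ a b, (G a : ℕ) < (G b : ℕ) → Q b ≤ Q a) :
    moment Q G ρ ≤ (∑ a, Q a ^ (1 / (1 + ρ))) ^ (1 + ρ) := by
  set α : ℝ := 1 / (1 + ρ)
  set T : ℝ := ∑ a, Q a ^ α
  have hα : 0 < α := by positivity
  have hαρ : α + α * ρ = 1 := by simp only [α]; field_simp
  have hT : 0 ≤ T := sum_nonneg fun a _ => rpow_nonneg (hQ a) α
  have hterm : ∀ a, Q a * ((G a : ℕ) + 1 : ℝ) ^ ρ ≤ Q a ^ α * T ^ ρ := by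
    intro a
    have hsplit : Q a = Q a ^ α * (Q a ^ α) ^ ρ := by
      rw [← rpow_mul (hQ a), ← rpow_add' (hQ a) (by rw [hαρ]; exact one_ne_zero), hαρ, rpow_one]
    have hrank : ((G a : ℕ) + 1 : ℝ) * Q a ^ α ≤ T :=
      rank_succ_mul_le_sum G _ (fun x => rpow_nonneg (hQ x) α)
        (fun a b h => rpow_le_rpow (hQ b) (hdec a b h) hα.le) a
    calc Q a * ((G a : ℕ) + 1 : ℝ) ^ ρ
        = Q a ^ α * (((G a : ℕ) + 1 : ℝ) * Q a ^ α) ^ ρ := by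
          nth_rewrite 1 [hsplit]
          rw [mul_rpow (by positivity) (rpow_nonneg (hQ a) α)]
          ring
      _ ≤ Q a ^ α * T ^ ρ :=
          mul_le_mul_of_nonneg_left (rpow_le_rpow (mul_nonneg (by positivity)
            (rpow_nonneg (hQ a) α)) hrank hρ) (rpow_nonneg (hQ a) α)
  calc moment Q G ρ ≤ ∑ a, Q a ^ α * T ^ ρ := sum_le_sum fun a _ => hterm a
    _ = T ^ (1 + ρ) := by
        rw [← sum_mul, rpow_add' hT (by positivity), rpow_one]

lemma sum_rpow_pow_le_mul_sum_inv (Q g : X → ℝ) (hQ : ∀ x, 0 ≤ Q x) (hg : ∀ x, 0 < g x)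
    {ρ : ℝ} (hρ : 0 ≤ ρ) :
    (∑ a, Q a ^ (1 / (1 + ρ))) ^ (1 + ρ) ≤ (∑ a, Q a * g a ^ ρ) * (∑ a, (g a)⁻¹) ^ ρ := by
  set p : ℝ := 1 + ρ
  have hp : 0 < p := by positivity
  have hholder := inner_le_weight_mul_Lp_of_nonneg univ (by linarith : 1 ≤ p)
    (fun a => (g a)⁻¹) (fun a => Q a ^ p⁻¹ * g a)
    (fun a => (inv_pos.mpr (hg a)).le) (fun a => mul_nonneg (rpow_nonneg (hQ a) _) (hg a).le)
  have hwf : ∀ a, (g a)⁻¹ * (Q a ^ p⁻¹ * g a) = Q a ^ (1 / p) := by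
    intro a
    field_simp [(hg a).ne']
  have hwfp : ∀ a, (g a)⁻¹ * (Q a ^ p⁻¹ * g a) ^ p = Q a * g a ^ ρ := by
    intro a
    rw [mul_rpow (rpow_nonneg (hQ a) _) (hg a).le, ← rpow_mul (hQ a), inv_mul_cancel₀ hp.ne',
      rpow_one, show p = 1 + ρ from rfl, rpow_one_add' (hg a).le (by positivity)]
    field_simp [(hg a).ne']
  simp only [hwf, hwfp] at hholder
  have hW : 0 ≤ ∑ a, (g a)⁻¹ := sum_nonneg fun a _ => (inv_pos.mpr (hg a)).le
  have hM : 0 ≤ ∑ a, Q a * g a ^ ρ :=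
    sum_nonneg fun a _ => mul_nonneg (hQ a) (rpow_nonneg (hg a).le _)
  calc (∑ a, Q a ^ (1 / p)) ^ p
      ≤ ((∑ a, (g a)⁻¹) ^ (1 - p⁻¹) * (∑ a, Q a * g a ^ ρ) ^ p⁻¹) ^ p :=
        rpow_le_rpow (sum_nonneg fun a _ => rpow_nonneg (hQ a) _) hholder hp.le
    _ = (∑ a, Q a * g a ^ ρ) * (∑ a, (g a)⁻¹) ^ ρ := by
        rw [mul_rpow (rpow_nonneg hW _) (rpow_nonneg hM _), ← rpow_mul hW, ← rpow_mul hM,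
          inv_mul_cancel₀ hp.ne', rpow_one, show (1 - p⁻¹) * p = ρ by field_simp; ring, mul_comm]

lemma sum_inv_rank_succ (G : X ≃ Fin (Fintype.card X)) :
    ∑ a, ((G a : ℕ) + 1 : ℝ)⁻¹ = harmonic (Fintype.card X) := by
  rw [G.sum_comp (fun k => ((k : ℕ) + 1 : ℝ)⁻¹), Fin.sum_univ_eq_sum_range
    (fun i => ((i : ℝ) + 1)⁻¹), harmonic]
  push_cast
  rfl

lemma sum_rpow_pow_le_moment_mul (Q : X → ℝ) (hQ : ∀ x, 0 ≤ Q x) {ρ : ℝ} (hρ : 0 ≤ ρ)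
    (G : X ≃ Fin (Fintype.card X)) :
    (∑ a, Q a ^ (1 / (1 + ρ))) ^ (1 + ρ) ≤
      moment Q G ρ * (1 + Real.log (Fintype.card X)) ^ ρ := by
  calc (∑ a, Q a ^ (1 / (1 + ρ))) ^ (1 + ρ)
      ≤ moment Q G ρ * (∑ a, ((G a : ℕ) + 1 : ℝ)⁻¹) ^ ρ :=
        sum_rpow_pow_le_mul_sum_inv Q _ hQ (fun a => by positivity) hρ
    _ ≤ moment Q G ρ * (1 + Real.log (Fintype.card X)) ^ ρ := by
        have hH : ∑ a, ((G a : ℕ) + 1 : ℝ)⁻¹ ≤ 1 + Real.log (Fintype.card X) :=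
          (sum_inv_rank_succ G).trans_le (harmonic_le_one_add_log _)
        exact mul_le_mul_of_nonneg_left (rpow_le_rpow (by positivity) hH hρ)
          (sum_nonneg fun a _ => mul_nonneg (hQ a) (by positivity))

end Guessing

lemma sum_prod_rpow_eq_pow {X : Type*} [Fintype X] (P : X → ℝ) (hP : ∀ x, 0 ≤ P x) (α : ℝ)
    (n : ℕ) : ∑ a : Fin n → X, (∏ i, P (a i)) ^ α = (∑ x, P x ^ α) ^ n := by
  simp_rw [← finsetProd_rpow _ _ (fun i _ => hP _) α]
  rw [← Fintype.prod_sum (fun (_ : Fin n) (x : X) => P x ^ α), prod_const, card_univ,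
    Fintype.card_fin]

lemma mul_renyiEntropy_one_div_one_add {X : Type*} [Fintype X] (P : X → ℝ) {ρ : ℝ}
    (hρ : ρ ≠ 0) (hρ' : 1 + ρ ≠ 0) :
    ρ * renyiEntropy (1 / (1 + ρ)) P = (1 + ρ) * Real.log (∑ x, P x ^ (1 / (1 + ρ))) := by
  rw [renyiEntropy, ← mul_assoc, show 1 - 1 / (1 + ρ) = ρ / (1 + ρ) by field_simp; ring,
    one_div_div, mul_div_cancel₀ _ hρ]

lemma tendsto_log_one_add_mul_div {c : ℝ} (hc : 0 ≤ c) :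
    Tendsto (fun n : ℕ => Real.log (1 + n * c) / n) atTop (𝓝 0) := by
  have hlog : Tendsto (fun n : ℕ => Real.log n / n) atTop (𝓝 0) :=
    isLittleO_log_id_atTop.tendsto_div_nhds_zero.comp tendsto_natCast_atTop_atTop
  have hupper := (tendsto_const_div_atTop_nhds_zero_nat (Real.log (1 + c))).add hlog
  rw [add_zero] at hupper
  refine tendsto_of_tendsto_of_tendsto_of_le_of_le' tendsto_const_nhds hupper ?_ ?_
  all_goals filter_upwards [eventually_ge_atTop 1] with n hn
  all_goals have hn' : (1 : ℝ) ≤ n := by exact_mod_cast hn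
  · exact div_nonneg (Real.log_nonneg (by nlinarith)) (by positivity)
  · rw [← add_div, ← Real.log_mul (by positivity) (by positivity)]
    gcongr
    nlinarith

lemma tendsto_one_div_mul_log_of_bounds {M : ℕ → ℝ} {S c ρ : ℝ} (hS : 0 < S) (hc : 0 ≤ c)
    (hlo : ∀ n : ℕ, (S ^ n) ^ (1 + ρ) ≤ M n * (1 + n * c) ^ ρ)
    (hhi : ∀ n : ℕ, M n ≤ (S ^ n) ^ (1 + ρ)) :
    Tendsto (fun n : ℕ => 1 / (n : ℝ) * Real.log (M n)) atTop (𝓝 ((1 + ρ) * Real.log S)) := by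
  set b := (1 + ρ) * Real.log S
  have hM : ∀ n, 0 < M n := fun n =>
    pos_of_mul_pos_left ((by positivity : (0 : ℝ) < (S ^ n) ^ (1 + ρ)).trans_le (hlo n))
      (by positivity)
  have hlog_lo : ∀ n : ℕ, n * b - ρ * Real.log (1 + n * c) ≤ Real.log (M n) := by
    intro n
    have h := Real.log_le_log (by positivity) (hlo n)
    rw [Real.log_mul (hM n).ne' (by positivity), Real.log_rpow (by positivity),
      Real.log_rpow (by positivity), Real.log_pow] at h
    linarith
  have hlog_hi : ∀ n : ℕ, Real.log (M n) ≤ n * b := by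
    intro n
    have h := Real.log_le_log (hM n) (hhi n)
    rw [Real.log_rpow (by positivity), Real.log_pow] at h
    linarith
  have hlower : Tendsto (fun n : ℕ => b - ρ * (Real.log (1 + n * c) / n)) atTop (𝓝 b) := by
    simpa using tendsto_const_nhds.sub ((tendsto_log_one_add_mul_div hc).const_mul ρ)
  refine tendsto_of_tendsto_of_tendsto_of_le_of_le' hlower tendsto_const_nhds ?_ ?_
  all_goals filter_upwards [eventually_ge_atTop 1] with n hn
  all_goals have hn' : (0 : ℝ) < n := by exact_mod_cast hn
  · rw [one_div_mul_eq_div, le_div_iff₀ hn']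
    calc (b - ρ * (Real.log (1 + n * c) / n)) * n = n * b - ρ * Real.log (1 + n * c) := by
          field_simp
      _ ≤ Real.log (M n) := hlog_lo n
  · rw [one_div_mul_eq_div, div_le_iff₀ hn']
    linarith [hlog_hi n]

/-- Arikan's asymptotic result: if `X₁, X₂, …` are i.i.d. from `P` on a finite `𝒳` and
`G*ₙ` is an optimal (probability-decreasing) guessing function on `𝒳ⁿ` for the product
distribution, then for any `ρ > 0`,
`lim_{n→∞} (1/n) log E[G*ₙ(𝐗ₙ)^ρ] = ρ · H_{1/(1+ρ)}(X₁)`. -/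
theorem stmt_11 {𝒳 : Type*} [Fintype 𝒳]
    (P : 𝒳 → ℝ) (hP0 : ∀ x, 0 ≤ P x) (hP1 : ∑ x, P x = 1)
    (ρ : ℝ) (hρ : 0 < ρ)
    (Gstar : ∀ n : ℕ, (Fin n → 𝒳) ≃ Fin (Fintype.card (Fin n → 𝒳)))
    (hdec : ∀ (n : ℕ) (a b : Fin n → 𝒳),
      (Gstar n a : ℕ) < (Gstar n b : ℕ) → ∏ i, P (b i) ≤ ∏ i, P (a i)) :
    Filter.Tendsto
      (fun n : ℕ => (1 / (n : ℝ)) *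
        Real.log (∑ a : Fin n → 𝒳, (∏ i, P (a i)) * ((Gstar n a : ℕ) + 1 : ℝ) ^ ρ))
      Filter.atTop (nhds (ρ * renyiEntropy (1 / (1 + ρ)) P)) := by
  have hS : 0 < ∑ x, P x ^ (1 / (1 + ρ)) := by
    obtain ⟨x, -, hx⟩ := exists_ne_zero_of_sum_ne_zero (hP1.trans_ne one_ne_zero)
    exact sum_pos' (fun y _ => rpow_nonneg (hP0 y) _)
      ⟨x, mem_univ x, rpow_pos_of_pos ((hP0 x).lt_of_ne' hx) _⟩
  have hQ : ∀ n (a : Fin n → 𝒳), 0 ≤ ∏ i, P (a i) := fun n a => prod_nonneg fun i _ => hP0 _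
  have hlog_card : ∀ n : ℕ,
      Real.log (Fintype.card (Fin n → 𝒳)) = n * Real.log (Fintype.card 𝒳) := by
    simp [Real.log_pow]
  rw [mul_renyiEntropy_one_div_one_add P hρ.ne' (by positivity)]
  refine tendsto_one_div_mul_log_of_bounds (c := Real.log (Fintype.card 𝒳)) hS
    (Real.log_natCast_nonneg _) (fun n => ?_) (fun n => ?_)
  · have h := Guessing.sum_rpow_pow_le_moment_mul _ (hQ n) hρ.le (Gstar n)
    rwa [sum_prod_rpow_eq_pow P hP0, hlog_card] at h
  · have h := Guessing.moment_le_sum_rpow_pow _ (hQ n) hρ.le (Gstar n) (hdec n)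
    rwa [sum_prod_rpow_eq_pow P hP0] at h
end

section
/- Let P be a distribution on finite 𝒳 and define for β ≥ 0 the tilted distribution P^(β)(x) ∝ P(x)^β. The Shannon entropy H(P^(β)) is continuous and non-increasing in β on [0, ∞), with H(P^(0)) = log|𝒳| and H(P^(1)) = H(P). Consequently, for any α with H(P) ≤ α ≤ log|𝒳| there exists β ∈ [0,1] with H(P^(β)) = α. -/
/-!
With `Z(β) = ∑ₓ P(x)^β`, the entropy of the tilted distribution is `log Z - β Z'/Z`, whose
derivative is `-β (Z Z'' - Z'²)/Z²`. By Cauchy–Schwarz `Z'² ≤ Z Z''`, so the entropy is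
non-increasing for `β ≥ 0`; at `β = 0` the tilt is uniform and at `β = 1` it is `P` itself,
and the intermediate value theorem on `[0, 1]` gives the rest.
-/

open Real Finset

noncomputable def shannonEnt {𝒳 : Type*} [Fintype 𝒳] (Q : 𝒳 → ℝ) : ℝ :=
  -∑ x, Q x * Real.log (Q x)

namespace Tilt

variable {𝒳 : Type*} [Fintype 𝒳] {P : 𝒳 → ℝ}

noncomputable def tilt (P : 𝒳 → ℝ) (β : ℝ) : 𝒳 → ℝ :=
  fun x => P x ^ β / ∑ x', P x' ^ β

/-- `logMoment P k` is the `k`-th derivative of the partition function `β ↦ ∑ₓ P(x)^β`. -/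
noncomputable def logMoment (P : 𝒳 → ℝ) (k : ℕ) (β : ℝ) : ℝ :=
  ∑ x, P x ^ β * log (P x) ^ k

lemma logMoment_zero_pos [Nonempty 𝒳] (hP : ∀ x, 0 < P x) (β : ℝ) :
    0 < logMoment P 0 β := by
  simpa [logMoment] using Finset.sum_pos (fun x _ => rpow_pos_of_pos (hP x) β) univ_nonempty

lemma hasDerivAt_logMoment (hP : ∀ x, 0 < P x) (k : ℕ) (β : ℝ) :
    HasDerivAt (logMoment P k) (logMoment P (k + 1) β) β := by
  unfold logMoment
  refine HasDerivAt.fun_sum fun x _ => ?_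
  simpa only [pow_succ', mul_assoc] using
    ((hasStrictDerivAt_const_rpow (hP x) β).hasDerivAt).mul_const (log (P x) ^ k)

lemma logMoment_one_sq_le (hP : ∀ x, 0 < P x) (β : ℝ) :
    logMoment P 1 β ^ 2 ≤ logMoment P 0 β * logMoment P 2 β := by
  have hPβ x : 0 ≤ P x ^ β := (rpow_pos_of_pos (hP x) β).le
  refine Finset.sum_sq_le_sum_mul_sum_of_sq_le_mul _
    (fun x _ => by simpa using hPβ x) (fun x _ => mul_nonneg (hPβ x) (sq_nonneg _))
    fun x _ => le_of_eq ?_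
  ring

lemma shannonEnt_tilt [Nonempty 𝒳] (hP : ∀ x, 0 < P x) (β : ℝ) :
    shannonEnt (tilt P β) = log (logMoment P 0 β) - β * logMoment P 1 β / logMoment P 0 β := by
  have hZ := (logMoment_zero_pos hP β).ne'
  have hZ_eq : ∑ x, P x ^ β = logMoment P 0 β := by simp [logMoment]
  have hM_eq : ∑ x, P x ^ β * log (P x) = logMoment P 1 β := by simp [logMoment]
  have hlog : ∀ x, log (tilt P β x) = β * log (P x) - log (logMoment P 0 β) := fun x => by
    rw [tilt, hZ_eq, log_div (rpow_pos_of_pos (hP x) β).ne' hZ, log_rpow (hP x)]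
  calc shannonEnt (tilt P β)
      = -∑ x, (β * (P x ^ β * log (P x)) - P x ^ β * log (logMoment P 0 β))
          / logMoment P 0 β := by
        rw [shannonEnt, neg_inj]
        refine sum_congr rfl fun x _ => ?_
        rw [hlog, tilt, hZ_eq]
        ring
    _ = _ := by
        rw [← sum_div, sum_sub_distrib, ← mul_sum, ← sum_mul, hZ_eq, hM_eq]
        field_simp
        ring

lemma hasDerivAt_shannonEnt_tilt [Nonempty 𝒳] (hP : ∀ x, 0 < P x) (β : ℝ) :
    HasDerivAt (fun b => shannonEnt (tilt P b))
      (-(β * (logMoment P 0 β * logMoment P 2 β - logMoment P 1 β ^ 2) / logMoment P 0 β ^ 2))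
      β := by
  have hZ := (logMoment_zero_pos hP β).ne'
  have hZ' := hasDerivAt_logMoment hP 0 β
  have hlogZ : HasDerivAt (fun b => log (logMoment P 0 b))
      (logMoment P 1 β / logMoment P 0 β) β :=
    hZ'.log hZ
  have hmean : HasDerivAt (fun b => b * logMoment P 1 b / logMoment P 0 b)
      (((1 * logMoment P 1 β + β * logMoment P 2 β) * logMoment P 0 β
        - β * logMoment P 1 β * logMoment P 1 β) / logMoment P 0 β ^ 2) β :=
    ((hasDerivAt_id β).mul (hasDerivAt_logMoment hP 1 β)).div hZ' hZ
  simp only [shannonEnt_tilt hP]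
  refine (hlogZ.fun_sub hmean).congr_deriv ?_
  field_simp
  ring

lemma shannonEnt_tilt_one (hP1 : ∑ x, P x = 1) :
    shannonEnt (tilt P 1) = shannonEnt P := by
  unfold tilt
  simp only [rpow_one, hP1, div_one]

lemma shannonEnt_tilt_zero [Nonempty 𝒳] (hP : ∀ x, 0 < P x) :
    shannonEnt (tilt P 0) = log (Fintype.card 𝒳) := by
  rw [shannonEnt_tilt hP]
  simp [logMoment]

lemma continuous_shannonEnt_tilt [Nonempty 𝒳] (hP : ∀ x, 0 < P x) :
    Continuous fun b => shannonEnt (tilt P b) :=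
  continuous_iff_continuousAt.2 fun β => (hasDerivAt_shannonEnt_tilt hP β).continuousAt

lemma antitoneOn_shannonEnt_tilt [Nonempty 𝒳] (hP : ∀ x, 0 < P x) :
    AntitoneOn (fun b => shannonEnt (tilt P b)) (Set.Ici 0) := by
  refine antitoneOn_of_hasDerivWithinAt_nonpos (convex_Ici 0)
    (continuous_shannonEnt_tilt hP).continuousOn
    (fun β _ => (hasDerivAt_shannonEnt_tilt hP β).hasDerivWithinAt) fun β hβ => ?_
  rw [interior_Ici] at hβ
  have hCS := logMoment_one_sq_le hP β
  have hdecay : 0 ≤ β * (logMoment P 0 β * logMoment P 2 β - logMoment P 1 β ^ 2)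
      / logMoment P 0 β ^ 2 :=
    div_nonneg (mul_nonneg hβ.le (by linarith)) (sq_nonneg _)
  linarith

end Tilt

open Tilt in
/-- For a full-support distribution `P` on a finite set `𝒳`, the Shannon entropy of the
tilted distribution `P^(β)(x) ∝ P(x)^β` is continuous and non-increasing in `β` on
`[0, ∞)`, with `H(P^(0)) = log|𝒳|` and `H(P^(1)) = H(P)`; consequently, for every
`α ∈ [H(P), log|𝒳|]` there is `β ∈ [0,1]` with `H(P^(β)) = α`. -/
theorem stmt_18 {𝒳 : Type*} [Fintype 𝒳]
    (P : 𝒳 → ℝ) (hP0 : ∀ x, 0 < P x) (hP1 : ∑ x, P x = 1)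
    (f : ℝ → ℝ)
    (hf : ∀ β : ℝ, f β = shannonEnt (fun x => P x ^ β / ∑ x', P x' ^ β)) :
    ContinuousOn f (Set.Ici (0 : ℝ)) ∧
    AntitoneOn f (Set.Ici (0 : ℝ)) ∧
    f 0 = Real.log (Fintype.card 𝒳) ∧
    f 1 = shannonEnt P ∧
    (∀ α : ℝ, shannonEnt P ≤ α → α ≤ Real.log (Fintype.card 𝒳) →
      ∃ β : ℝ, 0 ≤ β ∧ β ≤ 1 ∧ f β = α) := by
  have : Nonempty 𝒳 := by
    by_contra h
    simp [not_nonempty_iff.1 h] at hP1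
  obtain rfl : f = fun b => shannonEnt (tilt P b) := funext hf
  have hf0 := shannonEnt_tilt_zero hP0
  have hf1 := shannonEnt_tilt_one hP1
  refine ⟨(continuous_shannonEnt_tilt hP0).continuousOn, antitoneOn_shannonEnt_tilt hP0,
    hf0, hf1, fun α hα1 hα0 => ?_⟩
  obtain ⟨β, hβ, hβα⟩ := intermediate_value_Icc' zero_le_one
    (continuous_shannonEnt_tilt hP0).continuousOn
    (show α ∈ Set.Icc _ _ from ⟨hf1 ▸ hα1, hf0 ▸ hα0⟩)
  exact ⟨β, hβ.1, hβ.2, hβα⟩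
end
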